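/- (Rejection-sampling compression) Let Alice and Referee share N = 2^{2rk/δ} i.i.d. public random samples from distribution Q, where r = 4/δ and k = D(P‖Q)+1 for a target distribution P with c = D(P‖Q) < ∞ and δ > 0. Then Alice can send O(c/δ² + log(1/δ)/δ²) bits to Referee, after which Referee holds a sample from a distribution P' with ‖P − P'‖₁ ≤ δ. -/

import Mathlib

/-!
With `M = 2 ^ (4 (c + 1) / δ)`, Markov's inequality for the log-likelihood ratio `log₂ (P / Q)`
shows that the substate `P̃ ∝ min (M Q) P` carries mass `w ≥ 1 - δ/4`, hence
`‖P - P̃‖₁ ≤ 2 (1 - w) ≤ δ/2`. Accepting a shared sample `y` with probability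
`min 1 (P y / (M Q y))` makes accepted samples `P̃`-distributed, and each sample is accepted with
probability `w / M ≥ 3 / (4 M)`. Since `N ≥ (4/3) M log (4/δ)`, all `N` samples are rejected with
probability `ε ≤ δ/4`, so Referee's output `(1 - ε) P̃ + ε δ_{y₀}` is `δ`-close to `P`.
The message, an index below `N` or a failure flag, fits in `⌈log₂ N⌉ + 1 = O((c + 1)/δ²)` bits.
-/

open Matrix BigOperators
open scoped Kronecker ComplexOrder

noncomputable section

section QIT
variable {n : Type*} [Fintype n] [DecidableEq n]

/-- A density matrix: positive semidefinite with unit trace. -/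
def IsDensity (ρ : Matrix n n ℂ) : Prop := ρ.PosSemidef ∧ ρ.trace = 1

/-- Apply a real function to a Hermitian matrix via its spectral decomposition
(junk value `0` on non-Hermitian matrices). -/
def matFun (f : ℝ → ℝ) (A : Matrix n n ℂ) : Matrix n n ℂ :=
  if h : A.IsHermitian then
    (h.eigenvectorUnitary : Matrix n n ℂ) *
      Matrix.diagonal (fun i => (f (h.eigenvalues i) : ℂ)) *
      ((h.eigenvectorUnitary : Matrix n n ℂ))ᴴ
  else 0

/-- von Neumann entropy (in bits). -/
def vnEntropy (A : Matrix n n ℂ) : ℝ :=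
  if h : A.IsHermitian then (∑ i, Real.negMulLog (h.eigenvalues i)) / Real.log 2 else 0

/-- Quantum relative entropy `S(ρ‖σ) = Tr ρ (log ρ − log σ)` (in bits). -/
def relEntropy (ρ σ : Matrix n n ℂ) : ℝ :=
  ((ρ * (matFun Real.log ρ - matFun Real.log σ)).trace).re / Real.log 2

/-- Trace norm of a Hermitian matrix: sum of absolute values of eigenvalues. -/
def traceNorm (A : Matrix n n ℂ) : ℝ :=
  if h : A.IsHermitian then ∑ i, |h.eigenvalues i| else 0

end QIT

section Bipartite
variable {a b : Type*} [Fintype a] [Fintype b] [DecidableEq a] [DecidableEq b]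

/-- Partial trace over the second subsystem. -/
def ptraceR (M : Matrix (a × b) (a × b) ℂ) : Matrix a a ℂ :=
  fun i j => ∑ k, M (i, k) (j, k)

/-- Partial trace over the first subsystem. -/
def ptraceL (M : Matrix (a × b) (a × b) ℂ) : Matrix b b ℂ :=
  fun i j => ∑ k, M (k, i) (k, j)

/-- Quantum mutual information `I(A:B) = S(A) + S(B) − S(AB)` of a bipartite state. -/
def mutualInfo (ρ : Matrix (a × b) (a × b) ℂ) : ℝ :=
  vnEntropy (ptraceR ρ) + vnEntropy (ptraceL ρ) - vnEntropy ρ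

end Bipartite

section CQ
variable {X m : Type*} [Fintype X] [Fintype m] [DecidableEq X] [DecidableEq m]

/-- The classical-quantum state `E_{x←p}[|x⟩⟨x| ⊗ ρ_x]`. -/
def cqState (p : X → ℝ) (ρ : X → Matrix m m ℂ) : Matrix (X × m) (X × m) ℂ :=
  fun xi yj => if xi.1 = yj.1 then (p xi.1 : ℂ) * ρ xi.1 xi.2 yj.2 else 0

end CQ

/-- Probability distributions on a finite type. -/
def FinDist (X : Type*) [Fintype X] : Type _ :=
  {p : X → ℝ // (∀ x, 0 ≤ p x) ∧ ∑ x, p x = 1}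

instance (X : Type*) [Fintype X] [Nonempty X] : Nonempty (FinDist X) := by
  refine ⟨⟨fun _ => 1 / Fintype.card X, fun x => by positivity, ?_⟩⟩
  have h : (Fintype.card X : ℝ) ≠ 0 := by
    exact_mod_cast Fintype.card_ne_zero
  rw [Finset.sum_const, Finset.card_univ, nsmul_eq_mul]
  exact mul_one_div_cancel h

/-- Capacity of a classical-quantum channel. -/
def capacity {X m : Type*} [Fintype X] [DecidableEq X] [Fintype m] [DecidableEq m]
    (E : X → Matrix m m ℂ) : ℝ :=
  ⨆ p : FinDist X, mutualInfo (cqState p.1 E)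

/-- Kullback–Leibler divergence (in bits) between finitely supported distributions. -/
def klDiv {Y : Type*} [Fintype Y] (P Q : Y → ℝ) : ℝ :=
  ∑ y, P y * Real.logb 2 (P y / Q y)

/-- ℓ₁ distance between distributions. -/
def l1Dist {Y : Type*} [Fintype Y] (P Q : Y → ℝ) : ℝ := ∑ y, |P y - Q y|

/-- Binary entropy function (in bits). -/
def binH (p : ℝ) : ℝ := Real.binEntropy p / Real.log 2

open Finset Real

section KullbackLeibler

theorem sub_le_mul_log_div {p q : ℝ} (hp : 0 ≤ p) (hq : 0 < q) : p - q ≤ p * log (p / q) := by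
  have h := mul_le_mul_of_nonneg_left (self_sub_one_le_mul_log (div_nonneg hp hq.le)) hq.le
  rwa [mul_sub, mul_one, mul_div_cancel₀ _ hq.ne', ← mul_assoc, mul_div_cancel₀ _ hq.ne'] at h

theorem neg_le_mul_logb_div {p q : ℝ} (hp : 0 ≤ p) (hq : 0 ≤ q) : -q ≤ p * logb 2 (p / q) := by
  rcases hq.eq_or_lt with rfl | hq
  · simp
  have hlog2 : 0 < log 2 := log_pos one_lt_two
  -- `p log (p/q) = p log (p / (q/e)) - p ≥ -q/e`, and `1/e < log 2`
  have hshift : p * log (p / q) = p * log (p / (q / exp 1)) - p := by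
    rcases hp.eq_or_lt with rfl | hp
    · simp
    rw [div_div_eq_mul_div, log_div (mul_pos hp (exp_pos 1)).ne' hq.ne',
      log_mul hp.ne' (exp_pos 1).ne', log_exp, log_div hp.ne' hq.ne']
    ring
  have he := sub_le_mul_log_div hp (div_pos hq (exp_pos 1))
  have hinv : exp (-1) < log 2 := exp_neg_one_lt_d9.trans (by linarith [log_two_gt_d9])
  have hq' : q / exp 1 ≤ q * log 2 := by
    rw [div_eq_mul_inv, ← Real.exp_neg]; exact mul_le_mul_of_nonneg_left hinv.le hq.le
  rw [logb, ← mul_div_assoc, le_div_iff₀ hlog2]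
  linarith

variable {Y : Type*} [Fintype Y] {P Q : Y → ℝ}

theorem klDiv_nonneg (hP0 : ∀ y, 0 ≤ P y) (hP : ∑ y, P y = 1) (hQ0 : ∀ y, 0 ≤ Q y)
    (hQ : ∑ y, Q y = 1) (hPQ : ∀ y, Q y = 0 → P y = 0) : 0 ≤ klDiv P Q := by
  have hterm : ∀ y, (P y - Q y) / log 2 ≤ P y * logb 2 (P y / Q y) := fun y => by
    rw [logb, ← mul_div_assoc]
    gcongr
    rcases (hQ0 y).eq_or_lt with hq | hq
    · simp [← hq, hPQ y hq.symm]
    · exact sub_le_mul_log_div (hP0 y) hq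
  calc (0 : ℝ) = ∑ y, (P y - Q y) / log 2 := by rw [← sum_div, sum_sub_distrib, hP, hQ]; simp
    _ ≤ klDiv P Q := sum_le_sum fun y _ => hterm y

/-- Pointwise form of Markov's inequality for the log-likelihood ratio. -/
theorem mul_sub_min_le_mul_logb_div_add {p q L : ℝ} (hp : 0 ≤ p) (hq : 0 ≤ q)
    (hpq : q = 0 → p = 0) (hL : 0 ≤ L) :
    L * (p - min (2 ^ L * q) p) ≤ p * logb 2 (p / q) + q := by
  have hlb := neg_le_mul_logb_div hp hq
  rcases le_or_gt p (2 ^ L * q) with hle | hlt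
  · rw [min_eq_right hle, sub_self, mul_zero]; linarith
  have hq : 0 < q := hq.lt_of_ne fun h => by simp [← h, hpq h.symm] at hlt
  have hL' : L ≤ logb 2 (p / q) := by
    have hp : 0 < p := lt_of_le_of_lt (by positivity) hlt
    rw [le_logb_iff_rpow_le one_lt_two (div_pos hp hq), le_div_iff₀ hq]; exact hlt.le
  have hpos : 0 ≤ L * (2 ^ L * q) := by positivity
  rw [min_eq_left hlt.le]
  nlinarith [mul_le_mul_of_nonneg_left hL' hp]

theorem mul_one_sub_sum_min_le_klDiv_add_one (hP0 : ∀ y, 0 ≤ P y) (hP : ∑ y, P y = 1)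
    (hQ0 : ∀ y, 0 ≤ Q y) (hQ : ∑ y, Q y = 1) (hPQ : ∀ y, Q y = 0 → P y = 0) {L : ℝ}
    (hL : 0 ≤ L) : L * (1 - ∑ y, min (2 ^ L * Q y) (P y)) ≤ klDiv P Q + 1 := by
  calc L * (1 - ∑ y, min (2 ^ L * Q y) (P y))
      = ∑ y, L * (P y - min (2 ^ L * Q y) (P y)) := by rw [← mul_sum, sum_sub_distrib, hP]
    _ ≤ ∑ y, (P y * logb 2 (P y / Q y) + Q y) :=
        sum_le_sum fun y _ => mul_sub_min_le_mul_logb_div_add (hP0 y) (hQ0 y) (hPQ y) hL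
    _ = klDiv P Q + 1 := by rw [sum_add_distrib, hQ, klDiv]

end KullbackLeibler

section RejectionSampling

variable {Y : Type*} {N : ℕ}

def firstAcceptProb (a : Y → ℝ) (s : Fin N → Y) (j : Fin N) : ℝ :=
  a (s j) * ∏ i ∈ univ with i < j, (1 - a (s i))

/-- Alice's message: the index of the first accepted sample, or `none` if all are rejected. -/
def rejectionMsgProb (a : Y → ℝ) (s : Fin N → Y) : Option (Fin N) → ℝ
  | some j => firstAcceptProb a s j
  | none => ∏ i, (1 - a (s i))

def rejectionOutput (y₀ : Y) (s : Fin N → Y) : Option (Fin N) → Y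
  | some j => s j
  | none => y₀

variable {a : Y → ℝ}

theorem rejectionMsgProb_nonneg (ha0 : ∀ y, 0 ≤ a y) (ha1 : ∀ y, a y ≤ 1) (s : Fin N → Y) :
    ∀ o, 0 ≤ rejectionMsgProb a s o
  | some _ => mul_nonneg (ha0 _) (prod_nonneg fun _ _ => sub_nonneg.2 (ha1 _))
  | none => prod_nonneg fun _ _ => sub_nonneg.2 (ha1 _)

theorem sum_rejectionMsgProb (a : Y → ℝ) (s : Fin N → Y) : ∑ o, rejectionMsgProb a s o = 1 := by
  rw [Fintype.sum_option]
  simp only [rejectionMsgProb, firstAcceptProb]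
  rw [prod_one_sub_ordered]
  ring

theorem prod_ite_lt_ite_eq {M : Type*} [CommMonoid M] (j : Fin N) (u v : Fin N → M) :
    ∏ i, (if i < j then u i else if i = j then v i else 1) =
      (∏ i ∈ univ with i < j, u i) * v j := by
  rw [prod_ite, prod_ite, prod_const_one, mul_one, filter_filter]
  congr 1
  rw [prod_eq_single_of_mem j (by simp)]
  intro i _ _
  simp_all

variable [Fintype Y] {Q : Y → ℝ}

theorem sum_prod_mul_firstAcceptProb (hQ : ∑ y, Q y = 1) (a f : Y → ℝ) (j : Fin N) :
    ∑ s : Fin N → Y, (∏ i, Q (s i)) * (firstAcceptProb a s j * f (s j)) =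
      (1 - ∑ y, Q y * a y) ^ (j : ℕ) * ∑ y, Q y * a y * f y := by
  have hfactor : ∀ s : Fin N → Y, (∏ i, Q (s i)) * (firstAcceptProb a s j * f (s j)) =
      ∏ i, Q (s i) * (if i < j then 1 - a (s i) else if i = j then a (s i) * f (s i) else 1) := by
    intro s
    rw [prod_mul_distrib, prod_ite_lt_ite_eq, firstAcceptProb]
    ring
  simp_rw [hfactor]
  rw [← Fintype.prod_sum fun i y =>
    Q y * (if i < j then 1 - a y else if i = j then a y * f y else 1)]
  have hsum : ∀ i, ∑ y, Q y * (if i < j then 1 - a y else if i = j then a y * f y else 1) =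
      if i < j then 1 - ∑ y, Q y * a y else if i = j then ∑ y, Q y * a y * f y else 1 := by
    intro _
    split_ifs <;> simp [mul_sub, sum_sub_distrib, hQ, mul_assoc]
  simp_rw [hsum, prod_ite_lt_ite_eq, prod_const]
  rw [filter_gt_eq_Iio, Fin.card_Iio]

theorem sum_prod_mul_prod_one_sub (hQ : ∑ y, Q y = 1) (a : Y → ℝ) :
    ∑ s : Fin N → Y, (∏ i, Q (s i)) * ∏ i, (1 - a (s i)) = (1 - ∑ y, Q y * a y) ^ N := by
  simp_rw [← prod_mul_distrib]
  rw [← Fintype.prod_sum fun _ y => Q y * (1 - a y)]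
  simp [mul_sub, sum_sub_distrib, hQ]

theorem sum_prod_mul_rejectionOutput (hQ : ∑ y, Q y = 1) (a f : Y → ℝ) (y₀ : Y) :
    ∑ s : Fin N → Y, (∏ i, Q (s i)) * ∑ o, rejectionMsgProb a s o * f (rejectionOutput y₀ s o) =
      (∑ j ∈ range N, (1 - ∑ z, Q z * a z) ^ j) * ∑ z, Q z * a z * f z +
        (1 - ∑ z, Q z * a z) ^ N * f y₀ := by
  simp only [Fintype.sum_option, rejectionMsgProb, rejectionOutput, mul_add, sum_add_distrib]
  simp only [mul_sum]
  rw [add_comm, sum_comm]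
  congr 1
  · simp_rw [sum_prod_mul_firstAcceptProb hQ]
    rw [← sum_mul, Fin.sum_univ_eq_sum_range fun j => (1 - ∑ z, Q z * a z) ^ j, mul_sum]
  · simp_rw [← mul_assoc]
    rw [← sum_mul, sum_prod_mul_prod_one_sub hQ]

end RejectionSampling

section L1

variable {Y : Type*} [Fintype Y] {P : Y → ℝ}

theorem l1Dist_div_sum_le {T : Y → ℝ} (hT0 : ∀ y, 0 ≤ T y) (hTP : ∀ y, T y ≤ P y)
    (hP : ∑ y, P y = 1) (hT : 0 < ∑ y, T y) :
    l1Dist P (fun y => T y / ∑ z, T z) ≤ 2 * (1 - ∑ y, T y) := by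
  set w := ∑ y, T y
  have hw1 : w ≤ 1 := hP ▸ sum_le_sum fun y _ => hTP y
  have hterm : ∀ y, |P y - T y / w| ≤ (P y - T y) + (T y / w - T y) := fun y => by
    have : T y ≤ T y / w := le_div_self (hT0 y) hT hw1
    rw [abs_le]; constructor <;> linarith [hTP y]
  calc l1Dist P (fun y => T y / w) ≤ ∑ y, ((P y - T y) + (T y / w - T y)) :=
        sum_le_sum fun y _ => hterm y
    _ = 2 * (1 - w) := by
        rw [sum_add_distrib, sum_sub_distrib, sum_sub_distrib, ← sum_div, div_self hT.ne', hP]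
        ring

theorem l1Dist_mix_le [DecidableEq Y] {R : Y → ℝ} (hR0 : ∀ y, 0 ≤ R y) (hR : ∑ y, R y = 1)
    {ε : ℝ} (hε : 0 ≤ ε) (y₀ : Y) :
    l1Dist P (fun y => (1 - ε) * R y + ε * if y₀ = y then 1 else 0) ≤ l1Dist P R + 2 * ε := by
  have hterm : ∀ y, |P y - ((1 - ε) * R y + ε * if y₀ = y then 1 else 0)| ≤
      |P y - R y| + ε * R y + ε * if y₀ = y then 1 else 0 := fun y => by
    have hδ : 0 ≤ ε * if y₀ = y then (1 : ℝ) else 0 := mul_nonneg hε (by split_ifs <;> norm_num)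
    have hεR := mul_nonneg hε (hR0 y)
    rw [abs_le]
    constructor <;> linarith [le_abs_self (P y - R y), neg_abs_le (P y - R y)]
  calc _ ≤ ∑ y, (|P y - R y| + ε * R y + ε * if y₀ = y then 1 else 0) :=
        sum_le_sum fun y _ => hterm y
    _ = l1Dist P R + 2 * ε := by
        rw [sum_add_distrib, sum_add_distrib, ← mul_sum, ← mul_sum, hR, sum_ite_eq]
        simp [l1Dist]; ring

end L1

section Substate

variable {Y : Type*} {P Q : Y → ℝ} {M : ℝ}

/-- Acceptance probability of rejection sampling for `P` from `Q` with envelope constant `M`;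
where `Q y = 0` the division gives `0`. -/
def rejectionAcceptProb (M : ℝ) (P Q : Y → ℝ) (y : Y) : ℝ := min 1 (P y / (M * Q y))

theorem rejectionAcceptProb_nonneg (hP0 : ∀ y, 0 ≤ P y) (hQ0 : ∀ y, 0 ≤ Q y) (hM : 0 ≤ M)
    (y : Y) : 0 ≤ rejectionAcceptProb M P Q y :=
  le_min zero_le_one (div_nonneg (hP0 y) (mul_nonneg hM (hQ0 y)))

theorem rejectionAcceptProb_le_one (y : Y) : rejectionAcceptProb M P Q y ≤ 1 := min_le_left _ _

theorem mul_rejectionAcceptProb (hP0 : ∀ y, 0 ≤ P y) (hQ0 : ∀ y, 0 ≤ Q y) (hM : 0 < M) (y : Y) :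
    Q y * rejectionAcceptProb M P Q y = min (M * Q y) (P y) / M := by
  rcases (hQ0 y).eq_or_lt with hq | hq
  · simp [rejectionAcceptProb, ← hq, hP0 y]
  rw [rejectionAcceptProb, eq_div_iff hM.ne', mul_comm, ← mul_assoc, mul_min_of_nonneg _ _
    (mul_pos hM hq).le, mul_one, mul_div_cancel₀ _ (mul_pos hM hq).ne']

theorem l1Dist_rejectionSampling_le [Fintype Y] [DecidableEq Y] {N : ℕ} (hP0 : ∀ y, 0 ≤ P y)
    (hP : ∑ y, P y = 1) (hQ0 : ∀ y, 0 ≤ Q y) (hQ : ∑ y, Q y = 1) (hM : 0 < M)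
    (hw : 0 < ∑ y, min (M * Q y) (P y)) (y₀ : Y) :
    l1Dist P (fun y => ∑ s : Fin N → Y, (∏ i, Q (s i)) *
        ∑ o, rejectionMsgProb (rejectionAcceptProb M P Q) s o *
          (if rejectionOutput y₀ s o = y then 1 else 0)) ≤
      2 * (1 - ∑ y, min (M * Q y) (P y)) +
        2 * (1 - (∑ y, min (M * Q y) (P y)) / M) ^ N := by
  set T := fun y => min (M * Q y) (P y)
  set w := ∑ y, T y
  set ε := (1 - w / M) ^ N
  have hQa := mul_rejectionAcceptProb hP0 hQ0 hM
  have hp : ∑ y, Q y * rejectionAcceptProb M P Q y = w / M := by simp_rw [hQa, ← sum_div]; rfl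
  have hgeom : (∑ j ∈ range N, (1 - w / M) ^ j) * (w / M) = 1 - ε := by
    linear_combination -geom_sum_mul (1 - w / M) N
  have houtput : ∀ y, (∑ s : Fin N → Y, (∏ i, Q (s i)) *
      ∑ o, rejectionMsgProb (rejectionAcceptProb M P Q) s o *
        (if rejectionOutput y₀ s o = y then 1 else 0)) =
      (1 - ε) * (T y / w) + ε * if y₀ = y then 1 else 0 := fun y => by
    rw [sum_prod_mul_rejectionOutput hQ _ (fun z => if z = y then 1 else 0), hp, ← hgeom]
    simp only [mul_ite, mul_one, mul_zero, sum_ite_eq', mem_univ, if_true, hQa, T, ε]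
    field_simp
  have hT0 : ∀ y, 0 ≤ T y := fun y => le_min (mul_nonneg hM.le (hQ0 y)) (hP0 y)
  have hwM : w ≤ M := calc
    w ≤ ∑ y, M * Q y := sum_le_sum fun y _ => min_le_left _ _
    _ = M := by rw [← mul_sum, hQ, mul_one]
  have hε : 0 ≤ ε := pow_nonneg (sub_nonneg.2 ((div_le_one hM).2 hwM)) N
  simp_rw [houtput]
  calc _ ≤ l1Dist P (fun y => T y / w) + 2 * ε :=
        l1Dist_mix_le (fun y => div_nonneg (hT0 y) hw.le) (by rw [← sum_div, div_self hw.ne']) hε y₀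
    _ ≤ 2 * (1 - w) + 2 * ε := by
        gcongr
        exact l1Dist_div_sum_le hT0 (fun y => min_le_right _ _) hP hw

end Substate

section Encoding

open Function

variable {α β R : Type*} {ι : α → β}

theorem Function.Injective.sum_extend_zero_mul [Fintype α] [Fintype β]
    [NonUnitalNonAssocSemiring R] (hι : Injective ι) (f : α → R) (g : β → R) :
    ∑ t, extend ι f 0 t * g t = ∑ a, f a * g (ι a) := by
  refine (Fintype.sum_of_injective ι hι _ _ (fun t ht => ?_) fun a => by rw [hι.extend_apply]).symm
  rw [extend_apply' _ _ _ (by simpa using ht), Pi.zero_apply, zero_mul]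

theorem Function.Injective.sum_extend_zero [Fintype α] [Fintype β] [NonAssocSemiring R]
    (hι : Injective ι) (f : α → R) : ∑ t, extend ι f 0 t = ∑ a, f a := by
  simpa using hι.sum_extend_zero_mul f 1

theorem extend_zero_nonneg [Zero R] [Preorder R] {f : α → R} (hf : ∀ a, 0 ≤ f a) (t : β) :
    0 ≤ extend ι f 0 t := by
  classical
  rw [extend_def]
  split_ifs
  exacts [hf _, le_rfl]

end Encoding

section Parameters

theorem natCeil_two_rpow_add_one_le (x : ℝ) : ⌈(2 : ℝ) ^ x⌉₊ + 1 ≤ 2 ^ (⌈x⌉₊ + 1) := by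
  have hceil : ⌈(2 : ℝ) ^ x⌉₊ ≤ 2 ^ ⌈x⌉₊ := Nat.ceil_le.2 <| by
    rw [Nat.cast_pow, Nat.cast_ofNat, ← rpow_natCast]
    exact rpow_le_rpow_of_exponent_le one_le_two (Nat.le_ceil x)
  have := Nat.one_le_two_pow (n := ⌈x⌉₊)
  rw [pow_succ]
  omega

theorem one_div_sq_le_logb_div_sq_add_four {δ : ℝ} (hδ : 0 < δ) (hδ1 : δ < 1) :
    1 / δ ^ 2 ≤ logb 2 (1 / δ) / δ ^ 2 + 4 := by
  rcases le_or_gt δ (1 / 2) with hhalf | hhalf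
  · have hB : 1 ≤ logb 2 (1 / δ) := by
      rw [le_logb_iff_rpow_le one_lt_two (by positivity), rpow_one, le_div_iff₀ hδ]; linarith
    have : 1 / δ ^ 2 ≤ logb 2 (1 / δ) / δ ^ 2 := by gcongr
    linarith
  · have hB : 0 ≤ logb 2 (1 / δ) :=
      logb_nonneg one_lt_two (by rw [le_div_iff₀ hδ]; linarith)
    have : 1 / δ ^ 2 ≤ 4 := by rw [div_le_iff₀ (by positivity)]; nlinarith
    linarith [div_nonneg hB (sq_nonneg δ)]

theorem natCeil_add_one_le_forty_mul {c δ : ℝ} (hc : 0 ≤ c) (hδ : 0 < δ) (hδ1 : δ < 1) :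
    ((⌈2 * (4 / δ) * (c + 1) / δ⌉₊ + 1 : ℕ) : ℝ) ≤
      40 * (c / δ ^ 2 + logb 2 (1 / δ) / δ ^ 2 + 1) := by
  have hceil := Nat.ceil_lt_add_one (show 0 ≤ 2 * (4 / δ) * (c + 1) / δ by positivity)
  have hX : 2 * (4 / δ) * (c + 1) / δ = 8 * (c / δ ^ 2) + 8 * (1 / δ ^ 2) := by
    field_simp; ring
  have h1 := one_div_sq_le_logb_div_sq_add_four hδ hδ1
  have h2 : 0 ≤ c / δ ^ 2 := by positivity
  have h3 : 0 ≤ logb 2 (1 / δ) / δ ^ 2 :=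
    div_nonneg (logb_nonneg one_lt_two (by rw [le_div_iff₀ hδ]; linarith)) (sq_nonneg δ)
  push_cast
  linarith

theorem one_sub_pow_le_of_log_le {p η : ℝ} {n : ℕ} (hp1 : p ≤ 1) (hη : 0 < η)
    (h : log (1 / η) ≤ p * n) : (1 - p) ^ n ≤ η := calc
  (1 - p) ^ n ≤ exp (-p) ^ n := pow_le_pow_left₀ (by linarith) (one_sub_le_exp_neg p) n
  _ = exp (-(p * n)) := by rw [← exp_nat_mul]; ring_nf
  _ ≤ exp (-log (1 / η)) := by gcongr
  _ = η := by rw [log_div one_ne_zero hη.ne', log_one, zero_sub, neg_neg, exp_log hη]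

theorem four_thirds_mul_rpow_mul_log_le {c δ : ℝ} (hc : 0 ≤ c) (hδ : 0 < δ) (hδ1 : δ ≤ 1) :
    4 / 3 * (2 : ℝ) ^ (4 * (c + 1) / δ) * log (4 / δ) ≤ 2 ^ (2 * (4 / δ) * (c + 1) / δ) := by
  set u := 1 / δ
  have hu : 1 ≤ u := by rw [le_div_iff₀ hδ]; linarith
  set g := 4 * (c + 1) * u * (2 * u - 1)
  have hsplit : 2 * (4 / δ) * (c + 1) / δ = 4 * (c + 1) / δ + g := by
    simp only [g, u]; field_simp; ring
  have hg : 4 * u ^ 2 ≤ g := by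
    have : 0 ≤ c * (u * (2 * u - 1)) := mul_nonneg hc (by nlinarith)
    nlinarith
  have hexp : 1 + g * log 2 ≤ 2 ^ g := by
    rw [rpow_def_of_pos two_pos]; linarith [add_one_le_exp (log 2 * g)]
  have hlog : log (4 / δ) ≤ 2 * log 2 + (u - 1) := by
    rw [show 4 / δ = 2 ^ 2 * u by simp only [u]; ring, log_mul (by norm_num) (by positivity),
      log_pow]
    push_cast
    linarith [log_le_sub_one_of_pos (show 0 < u by positivity)]
  have key : 4 / 3 * log (4 / δ) ≤ 2 ^ g := by nlinarith [log_two_gt_d9, log_two_lt_d9]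
  calc 4 / 3 * (2 : ℝ) ^ (4 * (c + 1) / δ) * log (4 / δ)
      = 2 ^ (4 * (c + 1) / δ) * (4 / 3 * log (4 / δ)) := by ring
    _ ≤ 2 ^ (4 * (c + 1) / δ) * 2 ^ g := by gcongr
    _ = 2 ^ (2 * (4 / δ) * (c + 1) / δ) := by rw [hsplit, rpow_add two_pos]

theorem one_sub_div_rpow_pow_natCeil_le {c δ w : ℝ} (hc : 0 ≤ c) (hδ : 0 < δ) (hδ1 : δ ≤ 1)
    (hw : 3 / 4 ≤ w) (hw1 : w ≤ 1) :
    (1 - w / 2 ^ (4 * (c + 1) / δ)) ^ ⌈(2 : ℝ) ^ (2 * (4 / δ) * (c + 1) / δ)⌉₊ ≤ δ / 4 := by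
  have hM : 1 ≤ (2 : ℝ) ^ (4 * (c + 1) / δ) := one_le_rpow one_le_two (by positivity)
  refine one_sub_pow_le_of_log_le ((div_le_one (by positivity)).2 (hw1.trans hM))
    (by positivity) ?_
  calc log (1 / (δ / 4)) = 3 / 4 / 2 ^ (4 * (c + 1) / δ) *
      (4 / 3 * 2 ^ (4 * (c + 1) / δ) * log (4 / δ)) := by field_simp
    _ ≤ w / 2 ^ (4 * (c + 1) / δ) * ⌈(2 : ℝ) ^ (2 * (4 / δ) * (c + 1) / δ)⌉₊ := by
      have hlog : 0 ≤ log (4 / δ) := log_nonneg (by rw [le_div_iff₀ hδ]; linarith)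
      gcongr
      exact (four_thirds_mul_rpow_mul_log_le hc hδ hδ1).trans (Nat.le_ceil _)

end Parameters

/-- rejection-sampling compression. Sharing `N = 2^{2rk/δ}` i.i.d.
public samples from `Q` (with `r = 4/δ`, `k = D(P‖Q)+1`), Alice can send
`O(c/δ² + log(1/δ)/δ²)` bits after which Referee outputs a sample from some `P'`
with `‖P − P'‖₁ ≤ δ`. -/
theorem stmt13_rejection_sampling_compression :
    ∃ C : ℝ, 0 < C ∧
      ∀ (Y : Type) [Fintype Y] [DecidableEq Y] (P Q : Y → ℝ) (δ : ℝ),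
        (∀ y, 0 ≤ P y) → (∑ y, P y = 1) → (∀ y, 0 ≤ Q y) → (∑ y, Q y = 1) →
        (∀ y, Q y = 0 → P y = 0) → 0 < δ → δ < 1 →
        ∃ m : ℕ,
          (m : ℝ) ≤ C * (klDiv P Q / δ ^ 2 + Real.logb 2 (1 / δ) / δ ^ 2 + 1) ∧
          ∃ (enc : (Fin ⌈(2 : ℝ) ^ (2 * (4 / δ) * (klDiv P Q + 1) / δ)⌉₊ → Y) →
                Fin (2 ^ m) → ℝ)
            (dec : (Fin ⌈(2 : ℝ) ^ (2 * (4 / δ) * (klDiv P Q + 1) / δ)⌉₊ → Y) →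
                Fin (2 ^ m) → Y),
            (∀ s t, 0 ≤ enc s t) ∧ (∀ s, ∑ t, enc s t = 1) ∧
            l1Dist P (fun y =>
              ∑ s : Fin ⌈(2 : ℝ) ^ (2 * (4 / δ) * (klDiv P Q + 1) / δ)⌉₊ → Y,
                (∏ i, Q (s i)) * ∑ t, enc s t * (if dec s t = y then 1 else 0)) ≤ δ := by
  refine ⟨40, by norm_num, fun Y _ _ P Q δ hP0 hP hQ0 hQ hPQ hδ hδ1 => ?_⟩
  obtain ⟨y₀⟩ : Nonempty Y := by
    by_contra h
    simp [not_nonempty_iff.1 h] at hP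
  have hc := klDiv_nonneg hP0 hP hQ0 hQ hPQ
  set c := klDiv P Q
  set M : ℝ := 2 ^ (4 * (c + 1) / δ)
  set w := ∑ y, min (M * Q y) (P y)
  have hw : 1 - w ≤ δ / 4 := by
    have := mul_one_sub_sum_min_le_klDiv_add_one hP0 hP hQ0 hQ hPQ
      (show 0 ≤ 4 * (c + 1) / δ by positivity)
    rw [div_mul_eq_mul_div, div_le_iff₀ hδ] at this
    nlinarith
  have hw1 : w ≤ 1 := hP ▸ sum_le_sum fun y _ => min_le_right _ _
  have hε := one_sub_div_rpow_pow_natCeil_le hc hδ hδ1.le (by linarith) hw1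
  let ι := (finSuccEquiv _).symm.toEmbedding.trans
    (Fin.castLEEmb (natCeil_two_rpow_add_one_le (2 * (4 / δ) * (c + 1) / δ)))
  refine ⟨_, natCeil_add_one_le_forty_mul hc hδ hδ1,
    fun s => Function.extend ι (rejectionMsgProb (rejectionAcceptProb M P Q) s) 0,
    fun s => Function.extend ι (rejectionOutput y₀ s) fun _ => y₀,
    fun s => extend_zero_nonneg (rejectionMsgProb_nonneg
      (rejectionAcceptProb_nonneg hP0 hQ0 (by positivity)) rejectionAcceptProb_le_one s),
    fun s => (ι.injective.sum_extend_zero _).trans (sum_rejectionMsgProb _ s), ?_⟩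
  simp_rw [ι.injective.sum_extend_zero_mul, ι.injective.extend_apply]
  linarith [l1Dist_rejectionSampling_le hP0 hP hQ0 hQ (by positivity : 0 < M)
    (by linarith : 0 < w) y₀ (N := ⌈(2 : ℝ) ^ (2 * (4 / δ) * (c + 1) / δ)⌉₊)]
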